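/- Let B(c) = (1−c)(x(x−1)∂ + bx − c + 1) and f₂(c) = x^{1−c}·₂F₁(1, 1+b−c, 2−c; x) for generic b,c. Then B(c+1) • f₂(c+1) = c²·(b−c)/(1−c)·f₂(c). -/

import Mathlib

open Complex

/-- The Pochhammer symbol `(q)ₙ`. -/
noncomputable def poch (q : ℂ) (n : ℕ) : ℂ := (ascPochhammer ℂ n).eval q

/-- The second solution `f₂(c) = x^{1−c}·₂F₁(1, 1+b−c, 2−c; x)` of the Gauss
hypergeometric equation with parameters `(a,b,c) = (c,b,c)`, as a function of
`x ∈ (0,1)` (with values in `ℂ`). -/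
noncomputable def f2 (b c : ℂ) : ℝ → ℂ := fun x =>
  (x : ℂ) ^ (1 - c) *
    ∑' n : ℕ, poch 1 n * poch (1 + b - c) n / (poch (2 - c) n * n.factorial) * (x : ℂ) ^ n

/-!
Write `f₂(c+1) = x^{-c} F` with `F = ₂F₁(1, b-c; 1-c; x) = ∑ dₙ xⁿ`,
`dₙ = (b-c)ₙ/(1-c)ₙ`. Since `(x^{-c})' = -c x^{-c}/x`, the operator `B(c+1)` turns `f₂(c+1)` into
`-c x^{1-c} ((b-c) F + (x-1) F')`. The coefficient of `xⁿ` in `(b-c) F + (x-1) F'` is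
`(b-c+n) dₙ - (n+1) dₙ₊₁`, which the recurrence `(1-c+n) dₙ₊₁ = (b-c+n) dₙ` turns
into `-c dₙ₊₁ = -c (b-c)/(1-c) · (1+b-c)ₙ/(2-c)ₙ`, a multiple of the coefficient of `f₂(c)`.
Termwise differentiation is justified because `|dₙ₊₁/dₙ| → 1`.
-/

open Filter Topology

section PowerSeries

/- The ratio-test hypothesis `‖a (n+1)‖ ≤ t n * ‖a n‖` with `t → 1` allows vanishing
coefficients, as happens for `(p)ₙ/(q)ₙ` when `p` is a non-positive integer. -/

variable {a : ℕ → ℂ} {t : ℕ → ℝ}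

theorem summable_norm_mul_pow_of_norm_succ_le (ht : Tendsto t atTop (𝓝 1))
    (ha : ∀ n, ‖a (n + 1)‖ ≤ t n * ‖a n‖) {r : ℝ} (hr₀ : 0 ≤ r) (hr₁ : r < 1) :
    Summable fun n ↦ ‖a n‖ * r ^ n := by
  have hlt : r < (r + 1) / 2 := by linarith
  have hrt : Tendsto (fun n ↦ t n * r) atTop (𝓝 r) := by simpa using ht.mul_const r
  refine summable_of_ratio_norm_eventually_le (r := (r + 1) / 2) (by linarith) ?_
  filter_upwards [hrt.eventually_le_const hlt] with n hn
  calc ‖‖a (n + 1)‖ * r ^ (n + 1)‖ = ‖a (n + 1)‖ * r * r ^ n := by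
        rw [norm_mul, norm_norm, norm_pow, Real.norm_of_nonneg hr₀, pow_succ]; ring
    _ ≤ t n * ‖a n‖ * r * r ^ n := by gcongr; exact ha n
    _ = t n * r * (‖a n‖ * r ^ n) := by ring
    _ ≤ (r + 1) / 2 * ‖‖a n‖ * r ^ n‖ := by
        rw [Real.norm_of_nonneg (by positivity)]; gcongr

theorem summable_norm_derivCoeff_mul_pow_of_norm_succ_le (ht : Tendsto t atTop (𝓝 1))
    (ha : ∀ n, ‖a (n + 1)‖ ≤ t n * ‖a n‖) {r : ℝ} (hr₀ : 0 ≤ r) (hr₁ : r < 1) :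
    Summable fun n : ℕ ↦ ‖((n : ℂ) + 1) * a (n + 1)‖ * r ^ n := by
  have hfrac : Tendsto (fun n : ℕ ↦ ((n : ℝ) + 2) / (n + 1)) atTop (𝓝 1) := by
    simpa [add_comm] using tendsto_add_mul_div_add_mul_atTop_nhds (2 : ℝ) 1 1 one_ne_zero
  refine summable_norm_mul_pow_of_norm_succ_le
    (t := fun n : ℕ ↦ (n + 2) / (n + 1) * t (n + 1))
    (by simpa using hfrac.mul (ht.comp (tendsto_add_atTop_nat 1))) (fun n ↦ ?_) hr₀ hr₁
  have hn : (0 : ℝ) < n + 1 := by positivity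
  calc ‖((↑(n + 1) : ℂ) + 1) * a (n + 1 + 1)‖ = (n + 2) * ‖a (n + 1 + 1)‖ := by
        rw [norm_mul]; norm_cast
    _ ≤ (n + 2) * (t (n + 1) * ‖a (n + 1)‖) := by gcongr; exact ha _
    _ = (n + 2) / (n + 1) * t (n + 1) * ‖((n : ℂ) + 1) * a (n + 1)‖ := by
        rw [norm_mul]; norm_cast; field_simp

theorem summable_mul_pow_of_norm_succ_le (ht : Tendsto t atTop (𝓝 1))
    (ha : ∀ n, ‖a (n + 1)‖ ≤ t n * ‖a n‖) {x : ℝ} (hx : |x| < 1) :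
    Summable fun n ↦ a n * (x : ℂ) ^ n :=
  .of_norm <| (summable_norm_mul_pow_of_norm_succ_le ht ha (abs_nonneg x) hx).congr
    fun n ↦ by simp [norm_pow]

theorem summable_derivCoeff_mul_pow_of_norm_succ_le (ht : Tendsto t atTop (𝓝 1))
    (ha : ∀ n, ‖a (n + 1)‖ ≤ t n * ‖a n‖) {x : ℝ} (hx : |x| < 1) :
    Summable fun n : ℕ ↦ ((n : ℂ) + 1) * a (n + 1) * (x : ℂ) ^ n :=
  .of_norm <| (summable_norm_derivCoeff_mul_pow_of_norm_succ_le ht ha (abs_nonneg x) hx).congr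
    fun n ↦ by simp [norm_pow]

theorem hasDerivAt_tsum_mul_pow_of_norm_succ_le (ht : Tendsto t atTop (𝓝 1))
    (ha : ∀ n, ‖a (n + 1)‖ ≤ t n * ‖a n‖) {x : ℝ} (hx : |x| < 1) :
    HasDerivAt (fun y : ℝ ↦ ∑' n, a n * (y : ℂ) ^ n)
      (∑' n : ℕ, ((n : ℂ) + 1) * a (n + 1) * (x : ℂ) ^ n) x := by
  obtain ⟨r, hxr, hr₁⟩ := exists_between hx
  have hr₀ : 0 ≤ r := (abs_nonneg x).trans hxr.le
  have hu : Summable fun n : ℕ ↦ ‖a n * ((n : ℂ) * (r : ℂ) ^ (n - 1))‖ := by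
    refine (summable_nat_add_iff 1).mp <|
      (summable_norm_derivCoeff_mul_pow_of_norm_succ_le ht ha hr₀ hr₁).congr fun n ↦ ?_
    simp only [norm_mul, norm_pow, Complex.norm_real, Real.norm_of_nonneg hr₀,
      Nat.add_sub_cancel]
    push_cast; ring
  have hbound : ∀ n (y : ℝ), y ∈ Set.Ioo (-r) r →
      ‖a n * ((n : ℂ) * (y : ℂ) ^ (n - 1))‖ ≤ ‖a n * ((n : ℂ) * (r : ℂ) ^ (n - 1))‖ := by
    intro n y hy
    simp only [norm_mul, norm_pow, Complex.norm_real, Real.norm_of_nonneg hr₀, Real.norm_eq_abs]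
    gcongr
    exact (abs_lt.mpr hy).le
  have hderiv := hasDerivAt_tsum_of_isPreconnected hu isOpen_Ioo isPreconnected_Ioo
    (g := fun n (y : ℝ) ↦ a n * (y : ℂ) ^ n)
    (fun n y _ ↦ ((hasDerivAt_pow n (y : ℂ)).comp_ofReal).const_mul (a n))
    hbound (abs_lt.mp hxr) (summable_mul_pow_of_norm_succ_le ht ha hx) (abs_lt.mp hxr)
  refine hderiv.congr_deriv ?_
  rw [(hu.of_norm_bounded (hbound · x (abs_lt.mp hxr))).tsum_eq_zero_add]
  simp only [CharP.cast_eq_zero, zero_tsub, pow_zero, mul_one, mul_zero, Nat.cast_add,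
    Nat.cast_one, add_tsub_cancel_right, zero_add]
  exact tsum_congr fun n ↦ by ring

theorem const_mul_tsum_add_sub_one_mul_tsum_derivCoeff (ht : Tendsto t atTop (𝓝 1))
    (ha : ∀ n, ‖a (n + 1)‖ ≤ t n * ‖a n‖) (p : ℂ) {x : ℝ} (hx : |x| < 1) :
    p * ∑' n, a n * (x : ℂ) ^ n
        + ((x : ℂ) - 1) * ∑' n : ℕ, ((n : ℂ) + 1) * a (n + 1) * (x : ℂ) ^ n
      = ∑' n : ℕ, ((p + n) * a n - (n + 1) * a (n + 1)) * (x : ℂ) ^ n := by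
  have hT := (summable_mul_pow_of_norm_succ_le ht ha hx).hasSum
  have hT' := (summable_derivCoeff_mul_pow_of_norm_succ_le ht ha hx).hasSum
  have hxT' : HasSum (fun n : ℕ ↦ n * a n * (x : ℂ) ^ n)
      (x * ∑' n : ℕ, ((n : ℂ) + 1) * a (n + 1) * (x : ℂ) ^ n) := by
    rw [← hasSum_nat_add_iff' 1]
    simpa [pow_succ, mul_comm, mul_left_comm, mul_assoc] using hT'.mul_left (x : ℂ)
  rw [sub_one_mul, ← add_sub_assoc]
  refine (((hT.mul_left p).add hxT').sub hT').tsum_eq.symm.trans (tsum_congr fun n ↦ ?_)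
  ring

end PowerSeries

section Pochhammer

variable (p q : ℂ)

theorem poch_one (n : ℕ) : poch 1 n = n.factorial := ascPochhammer_eval_one ℂ n

theorem poch_succ (n : ℕ) : poch q (n + 1) = poch q n * (q + n) :=
  ascPochhammer_succ_eval n q

theorem poch_succ_left (n : ℕ) : poch q (n + 1) = q * poch (q + 1) n := by
  simp [poch, ascPochhammer_succ_left, Polynomial.eval_comp]

noncomputable def pochRatio (n : ℕ) : ℂ := poch p n / poch q n

theorem pochRatio_succ (n : ℕ) :
    pochRatio p q (n + 1) = pochRatio p q n * ((p + n) / (q + n)) := by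
  simp only [pochRatio, poch_succ, mul_div_mul_comm]

theorem pochRatio_succ_left (n : ℕ) :
    pochRatio p q (n + 1) = p / q * pochRatio (p + 1) (q + 1) n := by
  simp only [pochRatio, poch_succ_left, mul_div_mul_comm]

theorem tendsto_norm_add_div_add : Tendsto (fun n : ℕ ↦ ‖(p + n) / (q + n)‖) atTop (𝓝 1) := by
  simpa using (tendsto_add_mul_div_add_mul_atTop_nhds p q 1 one_ne_zero).norm

theorem norm_pochRatio_succ_le (n : ℕ) :
    ‖pochRatio p q (n + 1)‖ ≤ ‖(p + n) / (q + n)‖ * ‖pochRatio p q n‖ := by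
  rw [pochRatio_succ, norm_mul, mul_comm]

theorem pochRatio_contiguous {n : ℕ} (hq : q + n ≠ 0) :
    (p + n) * pochRatio p q n - (n + 1) * pochRatio p q (n + 1)
      = (q - 1) * (p / q) * pochRatio (p + 1) (q + 1) n := by
  have hrec : pochRatio p q (n + 1) * (q + n) = pochRatio p q n * (p + n) := by
    rw [pochRatio_succ]; field_simp
  rw [mul_assoc, ← pochRatio_succ_left]
  linear_combination -hrec

/-- `pochSeries p q x = ₂F₁(1, p; q; x)`, as `(1)ₙ = n!`. -/
noncomputable def pochSeries (x : ℝ) : ℂ := ∑' n, pochRatio p q n * (x : ℂ) ^ n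

variable {p q}

theorem hasDerivAt_pochSeries {x : ℝ} (hx : |x| < 1) :
    HasDerivAt (pochSeries p q)
      (∑' n : ℕ, ((n : ℂ) + 1) * pochRatio p q (n + 1) * (x : ℂ) ^ n) x :=
  hasDerivAt_tsum_mul_pow_of_norm_succ_le (tendsto_norm_add_div_add p q)
    (norm_pochRatio_succ_le p q) hx

theorem pochSeries_contiguous (hq : ∀ n : ℕ, q + n ≠ 0) {x : ℝ} (hx : |x| < 1) :
    p * pochSeries p q x
        + ((x : ℂ) - 1) * ∑' n : ℕ, ((n : ℂ) + 1) * pochRatio p q (n + 1) * (x : ℂ) ^ n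
      = (q - 1) * (p / q) * pochSeries (p + 1) (q + 1) x := by
  rw [pochSeries, const_mul_tsum_add_sub_one_mul_tsum_derivCoeff (tendsto_norm_add_div_add p q)
    (norm_pochRatio_succ_le p q) p hx, pochSeries, ← tsum_mul_left]
  exact tsum_congr fun n ↦ by rw [pochRatio_contiguous p q (hq n), mul_assoc]

end Pochhammer

theorem f2_eq_cpow_mul_pochSeries (b c : ℂ) (x : ℝ) :
    f2 b c x = (x : ℂ) ^ (1 - c) * pochSeries (1 + b - c) (2 - c) x :=
  congrArg _ (tsum_congr fun n ↦ by
    rw [pochRatio, poch_one, mul_comm (n.factorial : ℂ),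
      mul_div_mul_right _ _ (Nat.cast_ne_zero.2 n.factorial_ne_zero)])

theorem hasDerivAt_f2 (b c : ℂ) {x : ℝ} (hx₀ : 0 < x) (hx₁ : x < 1) :
    HasDerivAt (f2 b c)
      ((1 - c) * ((x : ℂ) ^ (1 - c) / x) * pochSeries (1 + b - c) (2 - c) x
        + (x : ℂ) ^ (1 - c) *
          ∑' n : ℕ, ((n : ℂ) + 1) * pochRatio (1 + b - c) (2 - c) (n + 1) * (x : ℂ) ^ n) x := by
  have hcpow :
      HasDerivAt (fun y : ℝ ↦ (y : ℂ) ^ (1 - c)) ((1 - c) * ((x : ℂ) ^ (1 - c) / x)) x := by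
    have := (hasStrictDerivAt_cpow_const (c := 1 - c)
      (ofReal_mem_slitPlane.2 hx₀)).hasDerivAt
    rw [cpow_sub _ _ (ofReal_ne_zero.2 hx₀.ne'), cpow_one] at this
    exact this.comp_ofReal
  exact (hcpow.mul (hasDerivAt_pochSeries (abs_lt.2 ⟨by linarith, hx₁⟩)))
    |>.congr_of_eventuallyEq (.of_forall (f2_eq_cpow_mul_pochSeries b c))

/-- with `B(c) = (1−c)(x(x−1)∂ + bx − c + 1)`, we have
`B(c+1) • f₂(c+1) = c²·(b−c)/(1−c)·f₂(c)` on `0 < x < 1`, for `c` not an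
integer. -/
theorem downstep_on_f2 (b c : ℂ) (hc : ∀ n : ℤ, c ≠ (n : ℂ)) :
    ∀ x ∈ Set.Ioo (0 : ℝ) 1,
      (1 - (c + 1)) * ((x : ℂ) * ((x : ℂ) - 1) * deriv (f2 b (c + 1)) x
          + (b * (x : ℂ) - (c + 1) + 1) * f2 b (c + 1) x)
        = c ^ 2 * (b - c) / (1 - c) * f2 b c x := by
  rintro x ⟨hx₀, hx₁⟩
  have hx : (x : ℂ) ≠ 0 := ofReal_ne_zero.2 hx₀.ne'
  have hq : ∀ n : ℕ, 1 - c + n ≠ 0 := fun n h ↦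
    hc (1 + n) (by push_cast; linear_combination -h)
  have hrel := pochSeries_contiguous (p := b - c) hq (abs_lt.2 ⟨by linarith, hx₁⟩)
  rw [show b - c + 1 = 1 + b - c by ring, show 1 - c + 1 = 2 - c by ring] at hrel
  rw [(hasDerivAt_f2 b (c + 1) hx₀ hx₁).deriv, f2_eq_cpow_mul_pochSeries,
    f2_eq_cpow_mul_pochSeries, show 1 + b - (c + 1) = b - c by ring,
    show (2 : ℂ) - (c + 1) = 1 - c by ring]
  have hu : (x : ℂ) ^ (1 - c) = (x : ℂ) ^ (1 - (c + 1)) * x := by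
    rw [show 1 - (c + 1) = 1 - c - 1 by ring, cpow_sub (1 - c) 1 hx, cpow_one,
      div_mul_cancel₀ _ hx]
  set u := (x : ℂ) ^ (1 - (c + 1))
  rw [hu]
  linear_combination (c ^ 2 * (x - 1) * pochSeries (b - c) (1 - c) x) * mul_div_cancel₀ u hx
    - c * u * x * hrel
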